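/- If Z ∈ ℝ^{(n+m)×(n+m)} is positive semidefinite with block form [[A, X],[Xᵀ, B]], then ‖X‖_* ≤ (1/2)(Tr(A) + Tr(B)) = (1/2)Tr(Z). -/

import Mathlib

open Matrix

noncomputable def nuclearNorm {n m : ℕ} (X : Matrix (Fin n) (Fin m) ℝ) : ℝ :=
  ∑ i, Real.sqrt (((by rw [Matrix.IsHermitian, Matrix.conjTranspose_eq_transpose_of_trivial, Matrix.transpose_mul, Matrix.transpose_transpose]) : (Xᵀ * X).IsHermitian).eigenvalues i)

noncomputable def frob {n m : ℕ} (X : Matrix (Fin n) (Fin m) ℝ) : ℝ :=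
  Real.sqrt (∑ i, ∑ j, (X i j)^2)

/-! Write `X vᵢ = σᵢ uᵢ`, where `(vᵢ)` is an orthonormal eigenbasis of `XᵀX`, `σᵢ²` its eigenvalues
and `uᵢ = σᵢ⁻¹ X vᵢ`; the `uᵢ` with `σᵢ ≠ 0` are orthonormal. Testing `Z ⪰ 0` against `(uᵢ, -vᵢ)`
gives `2σᵢ ≤ uᵢᵀ A uᵢ + vᵢᵀ B vᵢ`. Summing over `σᵢ ≠ 0` and using `∑ wᵢᵀ M wᵢ ≤ tr M` for
`M ⪰ 0` and any orthonormal family `(wᵢ)` (as `tr M - ∑ wᵢᵀ M wᵢ = tr (Q M Q)` for the projection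
`Q` onto the complement of their span) gives `2 ‖X‖_* ≤ tr A + tr B`. -/

namespace Matrix

variable {n m ι : Type*}

section Blocks

variable [Fintype n] [Fintype m]

lemma trace_fromBlocks {α : Type*} [AddCommMonoid α] (A : Matrix n n α) (B : Matrix n m α)
    (C : Matrix m n α) (D : Matrix m m α) :
    (fromBlocks A B C D).trace = A.trace + D.trace := by
  simp [trace, Fintype.sum_sum_type]

lemma PosSemidef.two_mul_dotProduct_mulVec_le {A : Matrix n n ℝ} {B : Matrix m m ℝ}
    {X : Matrix n m ℝ} (hZ : (fromBlocks A X Xᵀ B).PosSemidef) (u : n → ℝ) (v : m → ℝ) :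
    2 * (u ⬝ᵥ X *ᵥ v) ≤ u ⬝ᵥ A *ᵥ u + v ⬝ᵥ B *ᵥ v := by
  have h := hZ.dotProduct_mulVec_nonneg (Sum.elim u (-v))
  simp only [star_trivial, fromBlocks_mulVec, sumElim_dotProduct_sumElim, mulVec_neg,
    dotProduct_add, dotProduct_neg, neg_dotProduct, neg_neg, Sum.elim_comp_inl,
    Sum.elim_comp_inr] at h
  rw [dotProduct_mulVec v Xᵀ u, vecMul_transpose, dotProduct_comm (X *ᵥ v)] at h
  linarith

end Blocks

section TraceBound

variable [Fintype n] [Fintype ι] [DecidableEq ι]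

lemma PosSemidef.trace_transpose_mul_mul_le {A : Matrix n n ℝ} (hA : A.PosSemidef)
    {U : Matrix n ι ℝ} (hU : Uᵀ * U = 1) : (Uᵀ * A * U).trace ≤ A.trace := by
  classical
  set Q : Matrix n n ℝ := 1 - U * Uᵀ
  have hQ : Q * Q = Q := by
    simp only [Q, sub_mul, mul_sub, one_mul, mul_one]
    rw [Matrix.mul_assoc, ← Matrix.mul_assoc Uᵀ, hU, Matrix.one_mul]
    abel
  have hQAQ : (Q * A * Q).PosSemidef := by
    have hQt : Qᵀ = Q := by simp [Q, transpose_sub, transpose_mul]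
    simpa [hQt] using hA.mul_mul_conjTranspose_same Q
  have htrace : (Q * A * Q).trace = A.trace - (U * Uᵀ * A).trace := by
    rw [trace_mul_comm, ← Matrix.mul_assoc, hQ]
    simp [Q, sub_mul, trace_sub]
  calc (Uᵀ * A * U).trace = A.trace - (Q * A * Q).trace := by
        rw [trace_mul_cycle, htrace, sub_sub_cancel]
    _ ≤ A.trace := sub_le_self _ hQAQ.trace_nonneg

lemma PosSemidef.sum_dotProduct_mulVec_le_trace {A : Matrix n n ℝ} (hA : A.PosSemidef)
    {u : ι → n → ℝ} (hu : ∀ i j, u i ⬝ᵥ u j = if i = j then 1 else 0) :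
    ∑ i, u i ⬝ᵥ A *ᵥ u i ≤ A.trace := by
  set U : Matrix n ι ℝ := of fun a i => u i a
  have hU : Uᵀ * U = 1 := by
    ext i j
    simpa [U, mul_apply, dotProduct, one_apply] using hu i j
  have hsum : ∑ i, u i ⬝ᵥ A *ᵥ u i = (Uᵀ * A * U).trace := by
    simp only [trace, diag, mul_apply, dotProduct, mulVec, transpose_apply, U, of_apply,
      Finset.sum_mul, Finset.mul_sum]
    exact Finset.sum_congr rfl fun i _ => Finset.sum_comm.trans
      (Finset.sum_congr rfl fun a _ => Finset.sum_congr rfl fun b _ => by ring)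
  exact hsum ▸ hA.trace_transpose_mul_mul_le hU

end TraceBound

lemma isHermitian_transpose_mul_self [Fintype n] (X : Matrix n m ℝ) : (Xᵀ * X).IsHermitian := by
  simpa using isHermitian_conjTranspose_mul_self X

section SingularValues

variable [Fintype n] [Fintype m] [DecidableEq m] (X : Matrix n m ℝ)

noncomputable def singularValue (i : m) : ℝ :=
  √((isHermitian_transpose_mul_self X).eigenvalues i)

noncomputable def rightSingularVector (i : m) : m → ℝ :=
  (isHermitian_transpose_mul_self X).eigenvectorBasis i

-- `(singularValue X i)⁻¹ = 0` makes this the zero vector when `singularValue X i = 0`.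
noncomputable def leftSingularVector (i : m) : n → ℝ :=
  (singularValue X i)⁻¹ • (X *ᵥ rightSingularVector X i)

lemma sq_singularValue (i : m) :
    singularValue X i ^ 2 = (isHermitian_transpose_mul_self X).eigenvalues i :=
  Real.sq_sqrt (by simpa using (posSemidef_conjTranspose_mul_self X).eigenvalues_nonneg i)

lemma transpose_mul_self_mulVec_rightSingularVector (i : m) :
    (Xᵀ * X) *ᵥ rightSingularVector X i = singularValue X i ^ 2 • rightSingularVector X i := by
  rw [sq_singularValue]
  exact (isHermitian_transpose_mul_self X).mulVec_eigenvectorBasis i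

lemma rightSingularVector_dotProduct (i j : m) :
    rightSingularVector X i ⬝ᵥ rightSingularVector X j = if i = j then 1 else 0 := by
  simpa [rightSingularVector, EuclideanSpace.inner_eq_star_dotProduct, dotProduct_comm] using
    orthonormal_iff_ite.mp (isHermitian_transpose_mul_self X).eigenvectorBasis.orthonormal i j

lemma mulVec_rightSingularVector_dotProduct (i j : m) :
    X *ᵥ rightSingularVector X i ⬝ᵥ X *ᵥ rightSingularVector X j =
      if i = j then singularValue X i ^ 2 else 0 := by
  rw [dotProduct_comm, dotProduct_mulVec, ← mulVec_transpose, dotProduct_comm, mulVec_mulVec,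
    transpose_mul_self_mulVec_rightSingularVector, dotProduct_smul, rightSingularVector_dotProduct]
  split_ifs with h <;> simp [h]

lemma leftSingularVector_dotProduct_mulVec (i : m) :
    leftSingularVector X i ⬝ᵥ X *ᵥ rightSingularVector X i = singularValue X i := by
  rw [leftSingularVector, smul_dotProduct, mulVec_rightSingularVector_dotProduct, if_pos rfl,
    smul_eq_mul]
  rcases eq_or_ne (singularValue X i) 0 with h | h
  · simp [h]
  · field_simp

lemma leftSingularVector_dotProduct {i : m} (hi : singularValue X i ≠ 0) (j : m) :
    leftSingularVector X i ⬝ᵥ leftSingularVector X j = if i = j then 1 else 0 := by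
  simp only [leftSingularVector, smul_dotProduct, dotProduct_smul,
    mulVec_rightSingularVector_dotProduct, smul_eq_mul]
  split_ifs with h
  · subst h
    field_simp
  · simp

lemma PosSemidef.two_mul_sum_singularValue_le {A : Matrix n n ℝ} {B : Matrix m m ℝ}
    (hZ : (fromBlocks A X Xᵀ B).PosSemidef) :
    2 * ∑ i, singularValue X i ≤ A.trace + B.trace := by
  classical
  let S := {i // singularValue X i ≠ 0}
  have hA : A.PosSemidef := hZ.submatrix Sum.inl
  have hB : B.PosSemidef := hZ.submatrix Sum.inr
  have hsum : ∑ i, singularValue X i = ∑ i : S, singularValue X i := by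
    rw [← Finset.sum_filter_ne_zero, Finset.sum_subtype]
    simp
  have hu (i j : S) :
      leftSingularVector X i ⬝ᵥ leftSingularVector X j = if i = j then 1 else 0 := by
    simp [leftSingularVector_dotProduct X i.2, Subtype.coe_inj]
  have hv (i j : S) :
      rightSingularVector X i ⬝ᵥ rightSingularVector X j = if i = j then 1 else 0 := by
    simp [rightSingularVector_dotProduct, Subtype.coe_inj]
  calc 2 * ∑ i, singularValue X i
      = ∑ i : S, 2 * (leftSingularVector X i ⬝ᵥ X *ᵥ rightSingularVector X i) := by
        simp only [hsum, Finset.mul_sum, leftSingularVector_dotProduct_mulVec]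
    _ ≤ ∑ i : S, (leftSingularVector X i ⬝ᵥ A *ᵥ leftSingularVector X i +
          rightSingularVector X i ⬝ᵥ B *ᵥ rightSingularVector X i) :=
        Finset.sum_le_sum fun i _ => hZ.two_mul_dotProduct_mulVec_le _ _
    _ ≤ A.trace + B.trace := by
        rw [Finset.sum_add_distrib]
        exact add_le_add (hA.sum_dotProduct_mulVec_le_trace hu)
          (hB.sum_dotProduct_mulVec_le_trace hv)

end SingularValues

end Matrix

theorem stmt_4 {n m : ℕ} (A : Matrix (Fin n) (Fin n) ℝ) (B : Matrix (Fin m) (Fin m) ℝ)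
    (X : Matrix (Fin n) (Fin m) ℝ)
    (hZ : (Matrix.fromBlocks A X Xᵀ B).PosSemidef) :
    nuclearNorm X ≤ (1/2) * (A.trace + B.trace) ∧
    (1/2) * (A.trace + B.trace) = (1/2) * (Matrix.fromBlocks A X Xᵀ B).trace := by
  have hnuclear : nuclearNorm X = ∑ i, singularValue X i := rfl
  have hbound := hZ.two_mul_sum_singularValue_le
  exact ⟨by linarith, by rw [trace_fromBlocks]⟩
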